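/- (Hillam's theorem) Let L > 0, let a < b be real numbers, and let h : [a,b] → [a,b] be an L-Lipschitz function (|h(x) − h(y)| ≤ L|x − y| for all x, y ∈ [a,b]). Fix t with 0 < t ≤ 1/(1+L), let x₀ ∈ [a,b], and define x_{n+1} = (1−t)·x_n + t·h(x_n) for all n ≥ 0. Then the sequence (x_n) is monotone and converges to a fixed point of h. -/

import Mathlib

/-!
Write `d n = h (x n) - x n`, so that `x (n+1) - x n = t * d n`. The Lipschitz bound gives
`|d (n+1) - (1 - t) * d n| = |h (x (n+1)) - h (x n)| ≤ L * t * |d n| ≤ (1 - t) * |d n|`,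
the last step being exactly `t ≤ 1 / (1 + L)`. Hence `d` never changes sign, so the iteration
is monotone; being confined to `[a, b]` it converges, and a limit of the iteration of a
continuous map is a fixed point.
-/

open Filter Topology Set Function

section Module

variable {E : Type*} [AddCommGroup E] [Module ℝ E] {h : E → E} {t : ℝ} {x : ℕ → E}

theorem krasnoselskii_mem {s : Set E} (hs : Convex ℝ s) (hmaps : MapsTo h s s)
    (ht0 : 0 ≤ t) (ht1 : t ≤ 1) (hx0 : x 0 ∈ s)
    (hrec : ∀ n, x (n + 1) = (1 - t) • x n + t • h (x n)) (n : ℕ) : x n ∈ s := by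
  induction n with
  | zero => exact hx0
  | succ n ih => rw [hrec]; exact hs ih (hmaps ih) (by linarith) ht0 (by ring)

theorem isFixedPt_of_tendsto_krasnoselskii [TopologicalSpace E] [IsTopologicalAddGroup E]
    [ContinuousSMul ℝ E] [T2Space E] {c : E} (ht : t ≠ 0)
    (hrec : ∀ n, x (n + 1) = (1 - t) • x n + t • h (x n))
    (hx : Tendsto x atTop (𝓝 c)) (hh : Tendsto (h ∘ x) atTop (𝓝 (h c))) :
    IsFixedPt h c := by
  have hstep : Tendsto (fun n ↦ x (n + 1)) atTop (𝓝 ((1 - t) • c + t • h c)) := by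
    simpa only [hrec, comp_apply] using (hx.const_smul (1 - t)).add (hh.const_smul t)
  have hcomb : (1 - t) • c + t • h c = c :=
    tendsto_nhds_unique hstep (hx.comp (tendsto_add_atTop_nat 1))
  have : t • (h c - c) = 0 := by
    rw [smul_sub, sub_eq_zero]
    calc t • h c = (1 - t) • c + t • h c - (1 - t) • c := by abel
      _ = t • c := by rw [hcomb, sub_smul, one_smul]; abel
  exact sub_eq_zero.mp ((smul_eq_zero.mp this).resolve_left ht)

end Module

section Real

variable {h : ℝ → ℝ} {s : Set ℝ} {K : NNReal} {t : ℝ} {x : ℕ → ℝ}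

theorem abs_krasnoselskii_displacement_succ_sub_le (hlip : LipschitzOnWith K h s)
    (hmem : ∀ n, x n ∈ s) (ht0 : 0 ≤ t) (hKt : K * t ≤ 1 - t)
    (hrec : ∀ n, x (n + 1) = (1 - t) * x n + t * h (x n)) (n : ℕ) :
    |(h (x (n + 1)) - x (n + 1)) - (1 - t) * (h (x n) - x n)| ≤ (1 - t) * |h (x n) - x n| := by
  have hstep : x (n + 1) - x n = t * (h (x n) - x n) := by rw [hrec]; ring
  calc |(h (x (n + 1)) - x (n + 1)) - (1 - t) * (h (x n) - x n)|
      = dist (h (x (n + 1))) (h (x n)) := by rw [Real.dist_eq, hrec]; ring_nf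
    _ ≤ K * dist (x (n + 1)) (x n) := hlip.dist_le_mul _ (hmem _) _ (hmem _)
    _ = K * t * |h (x n) - x n| := by rw [Real.dist_eq, hstep, abs_mul, abs_of_nonneg ht0]; ring
    _ ≤ (1 - t) * |h (x n) - x n| := by gcongr

variable (hlip : LipschitzOnWith K h s) (hmem : ∀ n, x n ∈ s) (ht0 : 0 ≤ t)
  (hKt : K * t ≤ 1 - t) (hrec : ∀ n, x (n + 1) = (1 - t) * x n + t * h (x n))
include hlip hmem ht0 hKt hrec

theorem krasnoselskii_monotone (h0 : x 0 ≤ h (x 0)) : Monotone x := by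
  have hd : ∀ n, 0 ≤ h (x n) - x n := by
    intro n
    induction n with
    | zero => linarith
    | succ n ih =>
      have := abs_krasnoselskii_displacement_succ_sub_le hlip hmem ht0 hKt hrec n
      rw [abs_of_nonneg ih, abs_le] at this
      linarith
  refine monotone_nat_of_le_succ fun n ↦ ?_
  rw [hrec]
  nlinarith [mul_nonneg ht0 (hd n)]

theorem krasnoselskii_antitone (h0 : h (x 0) ≤ x 0) : Antitone x := by
  have hd : ∀ n, h (x n) - x n ≤ 0 := by
    intro n
    induction n with
    | zero => linarith
    | succ n ih =>
      have := abs_krasnoselskii_displacement_succ_sub_le hlip hmem ht0 hKt hrec n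
      rw [abs_of_nonpos ih, abs_le] at this
      linarith
  refine antitone_nat_of_succ_le fun n ↦ ?_
  rw [hrec]
  nlinarith [mul_nonpos_of_nonneg_of_nonpos ht0 (hd n)]

end Real

theorem exists_tendsto_of_monotone_or_antitone_of_mem_Icc {a b : ℝ} {x : ℕ → ℝ}
    (hx : Monotone x ∨ Antitone x) (hmem : ∀ n, x n ∈ Icc a b) :
    ∃ c ∈ Icc a b, Tendsto x atTop (𝓝 c) := by
  have hrange : range x ⊆ Icc a b := range_subset_iff.2 hmem
  obtain ⟨c, hc⟩ : ∃ c, Tendsto x atTop (𝓝 c) :=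
    hx.elim (fun hm ↦ ⟨_, tendsto_atTop_ciSup hm (bddAbove_Icc.mono hrange)⟩)
      (fun ha ↦ ⟨_, tendsto_atTop_ciInf ha (bddBelow_Icc.mono hrange)⟩)
  exact ⟨c, isClosed_Icc.mem_of_tendsto hc (Eventually.of_forall hmem), hc⟩

theorem stmt_4_general (L a b t : ℝ) (hL : 0 < L) (h : ℝ → ℝ)
    (hmaps : ∀ x ∈ Set.Icc a b, h x ∈ Set.Icc a b)
    (hlip : ∀ x ∈ Set.Icc a b, ∀ y ∈ Set.Icc a b, |h x - h y| ≤ L * |x - y|)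
    (ht0 : 0 < t) (ht1 : t ≤ 1 / (1 + L))
    (x : ℕ → ℝ) (hx0 : x 0 ∈ Set.Icc a b)
    (hrec : ∀ n, x (n + 1) = (1 - t) * x n + t * h (x n)) :
    (Monotone x ∨ Antitone x) ∧
      ∃ c ∈ Set.Icc a b, h c = c ∧ Filter.Tendsto x Filter.atTop (nhds c) := by
  have htL : t * (1 + L) ≤ 1 := (le_div_iff₀ (by linarith)).mp (by simpa using ht1)
  have hLt : L.toNNReal * t ≤ 1 - t := by rw [Real.coe_toNNReal L hL.le]; linarith
  have hLip : LipschitzOnWith L.toNNReal h (Icc a b) :=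
    .of_dist_le' fun x hx y hy ↦ by simpa only [Real.dist_eq] using hlip x hx y hy
  have hrec' : ∀ n, x (n + 1) = (1 - t) • x n + t • h (x n) := by simpa only [smul_eq_mul]
  have hmem := krasnoselskii_mem (convex_Icc a b) hmaps ht0.le (by nlinarith) hx0 hrec'
  have hmono : Monotone x ∨ Antitone x := (le_total (x 0) (h (x 0))).imp
    (krasnoselskii_monotone hLip hmem ht0.le hLt hrec)
    (krasnoselskii_antitone hLip hmem ht0.le hLt hrec)
  obtain ⟨c, hc, hxc⟩ := exists_tendsto_of_monotone_or_antitone_of_mem_Icc hmono hmem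
  have hhc : Tendsto (h ∘ x) atTop (𝓝 (h c)) :=
    (hLip.continuousOn c hc).tendsto.comp
      (tendsto_nhdsWithin_of_tendsto_nhds_of_eventually_within _ hxc (.of_forall hmem))
  exact ⟨hmono, c, hc, isFixedPt_of_tendsto_krasnoselskii ht0.ne' hrec' hxc hhc, hxc⟩

/-- Hillam's theorem: the Krasnoselskii iteration of an L-Lipschitz self-map
of `[a,b]` with `0 < t ≤ 1/(1+L)` is monotone and converges to a fixed point. -/
theorem stmt_4 (L a b t : ℝ) (hL : 0 < L) (hab : a < b) (h : ℝ → ℝ)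
    (hmaps : ∀ x ∈ Set.Icc a b, h x ∈ Set.Icc a b)
    (hlip : ∀ x ∈ Set.Icc a b, ∀ y ∈ Set.Icc a b, |h x - h y| ≤ L * |x - y|)
    (ht0 : 0 < t) (ht1 : t ≤ 1 / (1 + L))
    (x : ℕ → ℝ) (hx0 : x 0 ∈ Set.Icc a b)
    (hrec : ∀ n, x (n + 1) = (1 - t) * x n + t * h (x n)) :
    (Monotone x ∨ Antitone x) ∧
      ∃ c ∈ Set.Icc a b, h c = c ∧ Filter.Tendsto x Filter.atTop (nhds c) :=
  stmt_4_general L a b t hL h hmaps hlip ht0 ht1 x hx0 hrec
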